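/- For every ε ∈ (0,1), there exists a function f_ε : {0,1,2} → ℝ² that is a global minimizer of Q_ε over all functions f : {0,1,2} → ℝ². -/

import Mathlib

/-!
Write `g x = f x 0 - f x 1` for the margin of `f`. Every term of `Q_ε` is a softplus
`log (1 + exp (±(g x₁ + g x₂ + g x₃)))`, so `Q_ε f` depends continuously on `g` alone. Since
`softplus (-t) + softplus t ≥ |t|`, the two classes of the configurations `{0,0,0}`, `{0,0,1}` and
`{0,0,2}`, which carry positive weight, bound `Q_ε` below by a positive multiple of
`|3 g 0| + |2 g 0 + g 1| + |2 g 0 + g 2|`, which dominates the sup norm `‖g‖`. Hence `Q_ε` is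
coercive in `g` and attains its minimum.
-/

open Real

/-- softmax of a vector `v ∈ ℝ^d`: `softmax v j = exp (v j) / ∑ m, exp (v m)`. -/
noncomputable def softmax {d : ℕ} (v : Fin d → ℝ) : Fin d → ℝ :=
  fun j => Real.exp (v j) / ∑ m, Real.exp (v m)

/-- A single hard-OKO cross-entropy term on the summed logits of a set. -/
noncomputable def toyLoss (f : Fin 3 → Fin 2 → ℝ) (x₁ x₂ x₃ : Fin 3) (y : Fin 2) : ℝ :=
  -Real.log (softmax (fun j => f x₁ j + f x₂ j + f x₃ j) y)

/-- The toy hard OKO risk `Q_ε` over functions `f : {0,1,2} → ℝ²`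
(class 1 is index 0, class 2 is index 1). -/
noncomputable def toyRisk (ε : ℝ) (f : Fin 3 → Fin 2 → ℝ) : ℝ :=
  (1 - ε) ^ 3 / 2 * (toyLoss f 0 0 0 0 + toyLoss f 0 0 0 1)
  + ε * (1 - ε) ^ 2 / 2 *
      (toyLoss f 0 0 2 0 + toyLoss f 1 0 0 0 + toyLoss f 0 1 0 0
        + toyLoss f 0 0 1 1 + toyLoss f 2 0 0 1 + toyLoss f 0 2 0 1)
  + ε ^ 2 * (1 - ε) / 2 *
      (toyLoss f 1 1 0 0 + toyLoss f 1 0 2 0 + toyLoss f 0 1 2 0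
        + toyLoss f 2 2 0 1 + toyLoss f 2 0 1 1 + toyLoss f 2 1 0 1)
  + ε ^ 3 / 2 * (toyLoss f 1 1 2 0 + toyLoss f 2 2 1 1)

open Filter Topology

noncomputable def softplus (t : ℝ) : ℝ := log (1 + exp t)

lemma softplus_nonneg (t : ℝ) : 0 ≤ softplus t :=
  log_nonneg (by linarith [exp_pos t])

lemma le_softplus (t : ℝ) : t ≤ softplus t := by
  calc t = log (exp t) := (log_exp t).symm
    _ ≤ softplus t := log_le_log (exp_pos t) (by linarith)

@[fun_prop]
lemma continuous_softplus : Continuous softplus :=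
  (continuous_const.add continuous_exp).log fun t => (by positivity : (0 : ℝ) < 1 + exp t).ne'

lemma abs_le_softplus_neg_add_softplus (t : ℝ) : |t| ≤ softplus (-t) + softplus t :=
  abs_le'.2 ⟨by linarith [le_softplus t, softplus_nonneg (-t)],
    by linarith [le_softplus (-t), softplus_nonneg t]⟩

lemma neg_log_softmax_fin_two (v : Fin 2 → ℝ) (j : Fin 2) :
    -log (softmax v j) = softplus (v (j + 1) - v j) := by
  rw [softmax, ← log_inv, inv_div, softplus]
  congr 1
  fin_cases j
  · simp only [Fin.sum_univ_two, Fin.zero_eta, zero_add, exp_sub]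
    field_simp
  · simp only [Fin.sum_univ_two, Fin.mk_one, Fin.reduceAdd, exp_sub]
    field_simp
    ring

def margin (f : Fin 3 → Fin 2 → ℝ) (x : Fin 3) : ℝ := f x 0 - f x 1

def ofMargin (g : Fin 3 → ℝ) : Fin 3 → Fin 2 → ℝ := fun x => ![g x, 0]

@[simp]
lemma margin_ofMargin (g : Fin 3 → ℝ) : margin (ofMargin g) = g := by
  funext x; simp [margin, ofMargin]

lemma continuous_ofMargin : Continuous ofMargin := by unfold ofMargin; fun_prop

lemma toyLoss_nonneg (f : Fin 3 → Fin 2 → ℝ) (x₁ x₂ x₃ : Fin 3) (y : Fin 2) :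
    0 ≤ toyLoss f x₁ x₂ x₃ y := by
  rw [toyLoss, neg_log_softmax_fin_two]
  exact softplus_nonneg _

lemma toyLoss_zero (f : Fin 3 → Fin 2 → ℝ) (x₁ x₂ x₃ : Fin 3) :
    toyLoss f x₁ x₂ x₃ 0 = softplus (-(margin f x₁ + margin f x₂ + margin f x₃)) := by
  rw [toyLoss, neg_log_softmax_fin_two, zero_add, margin, margin, margin]
  ring_nf

lemma toyLoss_one (f : Fin 3 → Fin 2 → ℝ) (x₁ x₂ x₃ : Fin 3) :
    toyLoss f x₁ x₂ x₃ 1 = softplus (margin f x₁ + margin f x₂ + margin f x₃) := by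
  rw [toyLoss, neg_log_softmax_fin_two, show (1 : Fin 2) + 1 = 0 from rfl, margin, margin, margin]
  ring_nf

@[fun_prop]
lemma continuous_toyLoss (x₁ x₂ x₃ : Fin 3) (y : Fin 2) :
    Continuous fun f => toyLoss f x₁ x₂ x₃ y := by
  fin_cases y
  · simp only [Fin.zero_eta, toyLoss_zero, margin]; fun_prop
  · simp only [Fin.mk_one, toyLoss_one, margin]; fun_prop

lemma continuous_toyRisk (ε : ℝ) : Continuous (toyRisk ε) := by
  unfold toyRisk; fun_prop

lemma toyLoss_rotate (f : Fin 3 → Fin 2 → ℝ) (x₁ x₂ x₃ : Fin 3) (y : Fin 2) :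
    toyLoss f x₁ x₂ x₃ y = toyLoss f x₂ x₃ x₁ y := by
  simp only [toyLoss, add_comm (f x₁ _), add_assoc]

lemma abs_le_toyLoss_add_toyLoss (f : Fin 3 → Fin 2 → ℝ) (x₁ x₂ x₃ : Fin 3) :
    |margin f x₁ + margin f x₂ + margin f x₃| ≤ toyLoss f x₁ x₂ x₃ 0 + toyLoss f x₁ x₂ x₃ 1 := by
  rw [toyLoss_zero, toyLoss_one]
  exact abs_le_softplus_neg_add_softplus _

lemma norm_le_abs_add_abs_add_abs (g : Fin 3 → ℝ) :
    ‖g‖ ≤ |g 0 + g 0 + g 0| + |g 0 + g 0 + g 1| + |g 0 + g 2 + g 0| := by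
  refine (pi_norm_le_iff_of_nonneg (by positivity)).2 fun i => ?_
  rw [Real.norm_eq_abs, abs_le]
  have := abs_le.1 (le_refl |g 0 + g 0 + g 0|)
  have := abs_le.1 (le_refl |g 0 + g 0 + g 1|)
  have := abs_le.1 (le_refl |g 0 + g 2 + g 0|)
  match i with
  | 0 | 1 | 2 => constructor <;> linarith

lemma exists_pos_mul_norm_margin_le_toyRisk {ε : ℝ} (hε : ε ∈ Set.Ioo (0 : ℝ) 1) :
    ∃ c > 0, ∀ f : Fin 3 → Fin 2 → ℝ, c * ‖margin f‖ ≤ toyRisk ε f := by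
  obtain ⟨hε₀, hε₁⟩ := hε
  have hw₁ : 0 < (1 - ε) ^ 3 / 2 := by positivity
  have hw₂ : 0 < ε * (1 - ε) ^ 2 / 2 := by positivity
  have hw₃ : 0 < ε ^ 2 * (1 - ε) / 2 := by positivity
  have hw₄ : 0 < ε ^ 3 / 2 := by positivity
  refine ⟨min ((1 - ε) ^ 3 / 2) (ε * (1 - ε) ^ 2 / 2), lt_min hw₁ hw₂, fun f => ?_⟩
  have h₀ := abs_le_toyLoss_add_toyLoss f 0 0 0
  have h₁ := abs_le_toyLoss_add_toyLoss f 0 0 1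
  have h₂ := abs_le_toyLoss_add_toyLoss f 0 2 0
  -- For class 1, `Q_ε` lists `{0,0,1}` and `{0,0,2}` as `(1,0,0)` and `(0,0,2)`.
  rw [← toyLoss_rotate f 1 0 0 0] at h₁
  rw [← toyLoss_rotate f 0 0 2 0] at h₂
  have hL := toyLoss_nonneg f
  calc _ ≤ min ((1 - ε) ^ 3 / 2) (ε * (1 - ε) ^ 2 / 2)
          * (|margin f 0 + margin f 0 + margin f 0| + |margin f 0 + margin f 0 + margin f 1|
            + |margin f 0 + margin f 2 + margin f 0|) := by
        gcongr
        exact norm_le_abs_add_abs_add_abs _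
    _ ≤ (1 - ε) ^ 3 / 2 * |margin f 0 + margin f 0 + margin f 0|
          + ε * (1 - ε) ^ 2 / 2 * |margin f 0 + margin f 0 + margin f 1|
          + ε * (1 - ε) ^ 2 / 2 * |margin f 0 + margin f 2 + margin f 0| := by
        rw [mul_add, mul_add]
        gcongr
        exacts [min_le_left _ _, min_le_right _ _, min_le_right _ _]
    _ ≤ toyRisk ε f := by
        unfold toyRisk
        linarith [mul_le_mul_of_nonneg_left h₀ hw₁.le, mul_le_mul_of_nonneg_left h₁ hw₂.le,
          mul_le_mul_of_nonneg_left h₂ hw₂.le, mul_nonneg hw₂.le (hL 0 1 0 0),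
          mul_nonneg hw₂.le (hL 2 0 0 1), mul_nonneg hw₃.le (hL 1 1 0 0),
          mul_nonneg hw₃.le (hL 1 0 2 0), mul_nonneg hw₃.le (hL 0 1 2 0),
          mul_nonneg hw₃.le (hL 2 2 0 1), mul_nonneg hw₃.le (hL 2 0 1 1),
          mul_nonneg hw₃.le (hL 2 1 0 1), mul_nonneg hw₄.le (hL 1 1 2 0),
          mul_nonneg hw₄.le (hL 2 2 1 1)]

lemma toyLoss_ofMargin_margin (f : Fin 3 → Fin 2 → ℝ) (x₁ x₂ x₃ : Fin 3) (y : Fin 2) :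
    toyLoss (ofMargin (margin f)) x₁ x₂ x₃ y = toyLoss f x₁ x₂ x₃ y := by
  fin_cases y
  · simp only [Fin.zero_eta, toyLoss_zero, margin_ofMargin]
  · simp only [Fin.mk_one, toyLoss_one, margin_ofMargin]

lemma toyRisk_ofMargin_margin (ε : ℝ) (f : Fin 3 → Fin 2 → ℝ) :
    toyRisk ε (ofMargin (margin f)) = toyRisk ε f := by
  simp only [toyRisk, toyLoss_ofMargin_margin]

/-- For every `ε ∈ (0,1)` the toy hard OKO risk admits a global minimizer. -/
theorem toyRisk_exists_minimizer (ε : ℝ) (hε : ε ∈ Set.Ioo (0 : ℝ) 1) :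
    ∃ fε : Fin 3 → Fin 2 → ℝ, ∀ f : Fin 3 → Fin 2 → ℝ, toyRisk ε fε ≤ toyRisk ε f := by
  obtain ⟨c, hc, hbound⟩ := exists_pos_mul_norm_margin_le_toyRisk hε
  have hcoercive : Tendsto (fun g => toyRisk ε (ofMargin g)) (cocompact _) atTop :=
    tendsto_atTop_mono (fun g => by simpa using hbound (ofMargin g))
      (tendsto_norm_cocompact_atTop.const_mul_atTop hc)
  obtain ⟨g₀, hg₀⟩ :=
    ((continuous_toyRisk ε).comp continuous_ofMargin).exists_forall_le hcoercive
  exact ⟨ofMargin g₀, fun f => (hg₀ (margin f)).trans_eq (toyRisk_ofMargin_margin ε f)⟩
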